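/- For every x ∈ ℝ, (1/π) ∫₀^∞ (θ(x−γ) − θ(x+γ) − θ(−γ) + θ(γ))/γ dγ = (1/2) ln(x² + 1); that is, the Hilbert-transform difference Hθ(x) − Hθ(0) equals (1/2) ln(x²+1). -/

import Mathlib

/-!
Since `θ u = arctan u - π/2`, the integrand is `(arctan (x-γ) - arctan (x+γ) + 2 arctan γ) / γ`,
which vanishes at `x = 0` and whose `x`-derivative is the rational kernel
`4x / ((1 + (γ-x)²)(1 + (γ+x)²))`. Writing the integrand as the integral of this kernel over
`t ∈ [0, x]` and swapping the integrals (Fubini: the kernel is `O(|x| / (1 + γ²))`), the inner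
integral over `γ > 0` is elementary and equals `π t / (1 + t²)`, whose integral over `[0, x]`
is `(π/2) log (1 + x²)`.
-/

open MeasureTheory Real Filter Set

/-- `θ(x)`: the continuous branch of `arg (x − i)`, i.e. `arctan(−1/x)` for `x > 0`,
`arctan(−1/x) − π` for `x < 0`, and `−π/2` at `x = 0`. -/
noncomputable def theta (x : ℝ) : ℝ :=
  if x = 0 then -(Real.pi / 2)
  else if x < 0 then Real.arctan (-1 / x) - Real.pi
  else Real.arctan (-1 / x)

open Topology

lemma theta_eq_arctan_sub_pi_div_two (u : ℝ) : theta u = arctan u - π / 2 := by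
  unfold theta
  rcases lt_trichotomy u 0 with hu | rfl | hu
  · rw [if_neg hu.ne, if_pos hu, neg_div, one_div, arctan_neg, arctan_inv_of_neg hu]
    ring
  · simp
  · rw [if_neg hu.ne', if_neg hu.not_gt, neg_div, one_div, arctan_neg, arctan_inv_of_pos hu]
    ring

noncomputable def arctanKernel (γ t : ℝ) : ℝ :=
  4 * t / ((1 + (γ - t) ^ 2) * (1 + (γ + t) ^ 2))

lemma continuous_arctanKernel : Continuous (Function.uncurry arctanKernel) := by
  refine Continuous.div (by fun_prop) (by fun_prop) fun p => ?_
  positivity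

lemma one_add_sq_le_mul (γ t : ℝ) : 1 + γ ^ 2 ≤ (1 + (γ - t) ^ 2) * (1 + (γ + t) ^ 2) := by
  nlinarith [sq_nonneg t, sq_nonneg (γ ^ 2 - t ^ 2), sq_nonneg γ]

lemma abs_arctanKernel_le (γ t : ℝ) : |arctanKernel γ t| ≤ 4 * |t| / (1 + γ ^ 2) := by
  have hden : (0:ℝ) < (1 + (γ - t) ^ 2) * (1 + (γ + t) ^ 2) := by positivity
  rw [arctanKernel, abs_div, abs_mul, abs_of_pos hden, abs_of_pos four_pos]
  exact div_le_div_of_nonneg_left (by positivity) (by positivity) (one_add_sq_le_mul γ t)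

lemma integrable_arctanKernel (t : ℝ) : Integrable (arctanKernel · t) := by
  have hcont : Continuous (arctanKernel · t) :=
    continuous_arctanKernel.comp (Continuous.prodMk_left t)
  refine (integrable_inv_one_add_sq.const_mul (4 * |t|)).mono' hcont.aestronglyMeasurable
    (Eventually.of_forall fun γ => ?_)
  simpa [div_eq_mul_inv] using abs_arctanKernel_le γ t

lemma hasDerivAt_arctan_sub_arctan_add_div (γ t : ℝ) (hγ : γ ≠ 0) :
    HasDerivAt (fun s => (arctan (s - γ) - arctan (s + γ)) / γ) (arctanKernel γ t) t := by
  refine ((((hasDerivAt_id t).sub_const γ).arctan.sub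
    ((hasDerivAt_id t).add_const γ).arctan).div_const γ).congr_deriv ?_
  have : (0:ℝ) < 1 + (t - γ) ^ 2 := by positivity
  have : (0:ℝ) < 1 + (t + γ) ^ 2 := by positivity
  simp only [arctanKernel, id_eq]
  field_simp
  ring

-- Partial fractions of the kernel in `γ`.
lemma hasDerivAt_arctanKernel_primitive (t γ : ℝ) :
    HasDerivAt (fun s => t / (1 + t ^ 2) * (arctan (s - t) + arctan (s + t))
      + (log (1 + (s + t) ^ 2) - log (1 + (s - t) ^ 2)) / (2 * (1 + t ^ 2)))
      (arctanKernel γ t) γ := by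
  have hA : (0:ℝ) < 1 + (γ - t) ^ 2 := by positivity
  have hB : (0:ℝ) < 1 + (γ + t) ^ 2 := by positivity
  have hsq (c : ℝ) : HasDerivAt (fun s : ℝ => 1 + (s + c) ^ 2) (2 * (γ + c)) γ := by
    simpa using (((hasDerivAt_id γ).add_const c).pow 2).const_add 1
  have h := ((((hasDerivAt_id γ).sub_const t).arctan.add
    ((hasDerivAt_id γ).add_const t).arctan).const_mul (t / (1 + t ^ 2))).add
    ((((hsq t).log hB.ne').sub
      ((hsq (-t)).log (by simpa [← sub_eq_add_neg] using hA.ne'))).div_const (2 * (1 + t ^ 2)))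
  simp only [← sub_eq_add_neg] at h
  refine h.congr_deriv ?_
  simp only [arctanKernel, id_eq]
  field_simp
  ring

lemma tendsto_log_one_add_sq_sub (t : ℝ) :
    Tendsto (fun γ => log (1 + (γ + t) ^ 2) - log (1 + (γ - t) ^ 2)) atTop (𝓝 0) := by
  set g : ℝ → ℝ := fun u => (u ^ 2 + (1 + t * u) ^ 2) / (u ^ 2 + (1 - t * u) ^ 2)
  have hg : Tendsto g (𝓝 0) (𝓝 1) := by
    have : ContinuousAt g 0 := ContinuousAt.div (by fun_prop) (by fun_prop) (by norm_num)
    simpa [g] using this.tendsto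
  have hratio : Tendsto (fun γ => (1 + (γ + t) ^ 2) / (1 + (γ - t) ^ 2)) atTop (𝓝 1) := by
    refine (hg.comp tendsto_inv_atTop_zero).congr' ?_
    filter_upwards [eventually_gt_atTop 0] with γ hγ
    have : (0:ℝ) < 1 + (γ - t) ^ 2 := by positivity
    simp only [g, Function.comp]
    field_simp
  have := (continuousAt_log one_ne_zero).tendsto.comp hratio
  rw [log_one] at this
  refine this.congr fun γ => ?_
  rw [Function.comp_apply, log_div (by positivity) (by positivity)]

lemma integral_Ioi_arctanKernel (t : ℝ) :
    ∫ γ in Ioi 0, arctanKernel γ t = π * t / (1 + t ^ 2) := by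
  have hT : Tendsto arctan atTop (𝓝 (π / 2)) :=
    tendsto_nhds_of_tendsto_nhdsWithin tendsto_arctan_atTop
  have hlim := ((((hT.comp (tendsto_atTop_add_const_right _ (-t) tendsto_id)).add
    (hT.comp (tendsto_atTop_add_const_right _ t tendsto_id))).const_mul (t / (1 + t ^ 2))).add
    ((tendsto_log_one_add_sq_sub t).div_const (2 * (1 + t ^ 2))))
  rw [integral_Ioi_of_hasDerivAt_of_tendsto' (fun γ _ => hasDerivAt_arctanKernel_primitive t γ)
    (integrable_arctanKernel t).integrableOn (by simpa [← sub_eq_add_neg] using hlim)]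
  simp only [zero_sub, zero_add, arctan_neg, neg_sq]
  field_simp
  ring

lemma arctan_combination_div_eq_integral (x : ℝ) {γ : ℝ} (hγ : γ ≠ 0) :
    (arctan (x - γ) - arctan (x + γ) + 2 * arctan γ) / γ
      = ∫ t in 0..x, arctanKernel γ t := by
  have hcont : Continuous (arctanKernel γ) :=
    continuous_arctanKernel.comp (Continuous.prodMk_right γ)
  rw [intervalIntegral.integral_eq_sub_of_hasDerivAt
    (fun t _ => hasDerivAt_arctan_sub_arctan_add_div γ t hγ) (hcont.intervalIntegrable 0 x)]
  simp only [zero_sub, zero_add, arctan_neg]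
  ring

lemma integrable_arctanKernel_uIoc_prod_Ioi (x : ℝ) :
    Integrable (Function.uncurry fun t γ => arctanKernel γ t)
      ((volume.restrict (uIoc 0 x)).prod (volume.restrict (Ioi 0))) := by
  have : IsFiniteMeasure (volume.restrict (uIoc 0 x)) :=
    isFiniteMeasure_restrict.2 measure_Ioc_lt_top.ne
  have hbound : Integrable (fun p : ℝ × ℝ => 4 * |x| * (1 + p.2 ^ 2)⁻¹)
      ((volume.restrict (uIoc 0 x)).prod (volume.restrict (Ioi 0))) :=
    (integrable_const (4 * |x|)).mul_prod integrable_inv_one_add_sq.restrict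
  refine hbound.mono' (continuous_arctanKernel.comp continuous_swap).aestronglyMeasurable ?_
  rw [Measure.prod_restrict, ae_restrict_iff' (measurableSet_uIoc.prod measurableSet_Ioi)]
  refine Eventually.of_forall fun p hp => ?_
  have ht : |p.1| ≤ |x| := by simpa using abs_sub_left_of_mem_uIcc (uIoc_subset_uIcc hp.1)
  calc ‖arctanKernel p.2 p.1‖ ≤ 4 * |p.1| / (1 + p.2 ^ 2) := abs_arctanKernel_le p.2 p.1
    _ ≤ 4 * |x| * (1 + p.2 ^ 2)⁻¹ := by
      rw [← div_eq_mul_inv]; gcongr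

lemma integral_mul_div_one_add_sq (c x : ℝ) :
    ∫ t in 0..x, c * t / (1 + t ^ 2) = c / 2 * log (1 + x ^ 2) := by
  have hderiv (t : ℝ) :
      HasDerivAt (fun s => c / 2 * log (1 + s ^ 2)) (c * t / (1 + t ^ 2)) t := by
    have hsq : HasDerivAt (fun s : ℝ => 1 + s ^ 2) (2 * t) t := by
      simpa using (hasDerivAt_pow 2 t).const_add 1
    refine ((hsq.log (by positivity)).const_mul (c / 2)).congr_deriv ?_
    field_simp
  rw [intervalIntegral.integral_eq_sub_of_hasDerivAt (fun t _ => hderiv t)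
    ((Continuous.div (by fun_prop) (by fun_prop) fun t => by positivity).intervalIntegrable 0 x)]
  simp

lemma integral_Ioi_arctan_combination_div (x : ℝ) :
    ∫ γ in Ioi 0, (arctan (x - γ) - arctan (x + γ) + 2 * arctan γ) / γ
      = π / 2 * log (1 + x ^ 2) := by
  calc ∫ γ in Ioi 0, (arctan (x - γ) - arctan (x + γ) + 2 * arctan γ) / γ
      = ∫ γ in Ioi 0, ∫ t in 0..x, arctanKernel γ t :=
        setIntegral_congr_fun measurableSet_Ioi fun γ hγ =>
          arctan_combination_div_eq_integral x (ne_of_gt hγ)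
    _ = ∫ t in 0..x, ∫ γ in Ioi 0, arctanKernel γ t :=
        (intervalIntegral_integral_swap (integrable_arctanKernel_uIoc_prod_Ioi x)).symm
    _ = ∫ t in 0..x, π * t / (1 + t ^ 2) := by simp only [integral_Ioi_arctanKernel]
    _ = π / 2 * log (1 + x ^ 2) := integral_mul_div_one_add_sq π x

/-- `Hθ(x) − Hθ(0) = (1/2) ln(x²+1)`, expressed via the convergent improper integral. -/
theorem statement16 :
    ∀ x : ℝ,
      (1 / Real.pi) * ∫ γ in Set.Ioi (0 : ℝ),
          (theta (x - γ) - theta (x + γ) - theta (-γ) + theta γ) / γ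
        = 1 / 2 * Real.log (x ^ 2 + 1) := by
  intro x
  have hintegrand : ∀ γ ∈ Ioi (0 : ℝ),
      (theta (x - γ) - theta (x + γ) - theta (-γ) + theta γ) / γ
        = (arctan (x - γ) - arctan (x + γ) + 2 * arctan γ) / γ := fun γ _ => by
    simp only [theta_eq_arctan_sub_pi_div_two, arctan_neg]
    ring
  rw [setIntegral_congr_fun measurableSet_Ioi hintegrand, integral_Ioi_arctan_combination_div,
    add_comm (x ^ 2)]
  field_simp
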